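/- arXiv:1203.1809 — 7 statements merged into one kernel-verified Lean document; each statement's English description precedes it below -/
import Mathlib

section
/- Let (f,t) be a payment-based mechanism such that for every agent i and every type vector θ_{-i} of the other agents, the infimum S_i(θ_{-i}) := inf_{θ'_i ∈ Θ_i} T(θ'_i, θ_{-i}) exists in ℝ (the set {T(θ'_i,θ_{-i}) : θ'_i ∈ Θ_i} is nonempty and bounded below). Then the payment-based mechanism (f, t^{BCGC}) defined by t_i^{BCGC}(θ) := t_i(θ) − S_i(θ_{-i})/n is non-deficit. -/
open Finset

theorem IsGLB.le_of_update_self {ι α : Type*} [DecidableEq ι] [Preorder α] {β : ι → Type*}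
    {T : (∀ i, β i) → α} {θ : ∀ i, β i} {i : ι} {s : α}
    (h : IsGLB {y | ∃ x : β i, y = T (Function.update θ i x)} s) : s ≤ T θ :=
  h.1 ⟨θ i, by rw [Function.update_eq_self]⟩

theorem sum_sub_div_card_nonneg {ι 𝕜 : Type*} [Fintype ι] [Field 𝕜] [LinearOrder 𝕜]
    [IsStrictOrderedRing 𝕜] (t s : ι → 𝕜) (hs : ∀ i, s i ≤ ∑ j, t j) :
    0 ≤ ∑ i, (t i - s i / Fintype.card ι) := by
  cases isEmpty_or_nonempty ι
  · simp
  have hcard : (0 : 𝕜) < Fintype.card ι := by exact_mod_cast Fintype.card_pos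
  have hshare : ∑ i, s i / Fintype.card ι ≤ ∑ j, t j :=
    calc ∑ i, s i / Fintype.card ι
        ≤ ∑ _i : ι, (∑ j, t j) / Fintype.card ι :=
          sum_le_sum fun i _ => div_le_div_of_nonneg_right (hs i) hcard.le
      _ = ∑ j, t j := by
          rw [sum_const, card_univ, nsmul_eq_mul, mul_div_cancel₀ _ hcard.ne']
  rw [sum_sub_distrib]
  exact sub_nonneg.mpr hshare

theorem stmt_0_general {n : ℕ} {Θ : Fin n → Type}
    (t : Fin n → (∀ i, Θ i) → ℝ)
    (T : (∀ i, Θ i) → ℝ) (hT : ∀ θ, T θ = ∑ i, t i θ)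
    (S : Fin n → (∀ i, Θ i) → ℝ)
    (hS : ∀ (i : Fin n) (θ : ∀ j, Θ j),
      IsGLB {y : ℝ | ∃ x : Θ i, y = T (Function.update θ i x)} (S i θ)) :
    ∀ θ : ∀ j, Θ j, 0 ≤ ∑ i, (t i θ - S i θ / n) := by
  intro θ
  have hS_le : ∀ i, S i θ ≤ ∑ j, t j θ := fun i => hT θ ▸ (hS i θ).le_of_update_self
  simpa only [Fintype.card_fin] using sum_sub_div_card_nonneg (t · θ) (S · θ) hS_le

theorem stmt_0 {n : ℕ} (hn : 2 ≤ n) {D : Type} [Fintype D] [Nonempty D]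
    {Θ : Fin n → Type} [∀ i, Nonempty (Θ i)]
    (v : ∀ i : Fin n, D → Θ i → ℝ)
    (f : (∀ i, Θ i) → D)
    (t : Fin n → (∀ i, Θ i) → ℝ)
    (T : (∀ i, Θ i) → ℝ) (hT : ∀ θ, T θ = ∑ i, t i θ)
    (S : Fin n → (∀ i, Θ i) → ℝ)
    (hS : ∀ (i : Fin n) (θ : ∀ j, Θ j),
      IsGLB {y : ℝ | ∃ x : Θ i, y = T (Function.update θ i x)} (S i θ)) :
    ∀ θ : ∀ j, Θ j, 0 ≤ ∑ i, (t i θ - S i θ / n) :=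
  stmt_0_general t T hT S hS
end

section
/- Assume all type sets equal a common set Θ_0 and that the total VCG payment VCG(θ) = Σ_i VCG_i(θ) is permutation independent. Let r = (r_1,…,r_n) be a Groves mechanism and define r'(x) := (1/n!) · Σ_{j=1}^n Σ_{π ∈ Π(n−1)} r_j(x^π) for x ∈ Θ_0^{n−1}, where Π(n−1) is the set of permutations of {1,…,n−1} and (x^π)_i = x_{π^{-1}(i)}. If r is non-deficit, then the anonymous Groves mechanism determined by r' is non-deficit. -/
/-!
Averaging `r` over all relabellings of the agents preserves the non-deficit inequality, because the
total VCG payment is itself invariant under relabelling. Concretely, summing the redistribution `r'`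
over the agents regroups, for each `j`, the pairs `(i, σ)` into the `(n+1)!` permutations `τ` of the
agents, so that `∑ᵢ r'(θ₋ᵢ)` is the average over `τ` of `∑ⱼ rⱼ((θ ∘ τ)₋ⱼ) ≤ VCG(θ ∘ τ) = VCG(θ)`.
-/

noncomputable def VCGi {N : ℕ} {D : Type} [Fintype D] [Nonempty D]
    {Θ : Type} (v : Fin N → D → Θ → ℝ) (f : (Fin N → Θ) → D)
    (i : Fin N) (θ : Fin N → Θ) : ℝ :=
  (Finset.univ.sup' Finset.univ_nonempty fun d =>
      ∑ j ∈ Finset.univ.erase i, v j d (θ j)) -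
    ∑ j ∈ Finset.univ.erase i, v j (f θ) (θ j)

noncomputable def VCGtot {N : ℕ} {D : Type} [Fintype D] [Nonempty D]
    {Θ : Type} (v : Fin N → D → Θ → ℝ) (f : (Fin N → Θ) → D)
    (θ : Fin N → Θ) : ℝ :=
  ∑ i, VCGi v f i θ

open Finset Equiv

section PermSums

variable {α M : Type*} [AddCommMonoid M]

theorem sum_perm_apply_inv_comp {ι : Type*} [Fintype ι] [DecidableEq ι] (g : (ι → α) → M)
    (x : ι → α) (τ : Perm ι) :
    ∑ σ : Perm ι, g (fun i => x (τ⁻¹ (σ⁻¹ i))) = ∑ σ : Perm ι, g (fun i => x (σ⁻¹ i)) :=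
  Fintype.sum_equiv (Equiv.mulRight τ) _ _ fun σ => by simp [mul_inv_rev]

theorem sum_perm_comp_of_invariant {ι : Type*} [Fintype ι] [DecidableEq ι] (F : (ι → α) → M)
    (hF : ∀ (θ : ι → α) (σ : Perm ι), F (fun i => θ (σ⁻¹ i)) = F θ) (θ : ι → α) :
    ∑ τ : Perm ι, F (θ ∘ τ) = (Fintype.card ι).factorial • F θ := by
  have h : ∀ τ : Perm ι, F (θ ∘ τ) = F θ := fun τ => by simpa [Function.comp_def] using hF θ τ⁻¹
  simp only [h, sum_const, card_univ, Fintype.card_perm]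

end PermSums

namespace Fin

variable {n : ℕ}

def succAbovePerm (j : Fin (n + 1)) (p : Fin (n + 1) × Perm (Fin n)) : Perm (Fin (n + 1)) :=
  (finSuccEquiv' j).trans ((Equiv.optionCongr p.2⁻¹).trans (finSuccEquiv' p.1).symm)

@[simp]
theorem succAbovePerm_apply_self (j : Fin (n + 1)) (p : Fin (n + 1) × Perm (Fin n)) :
    succAbovePerm j p j = p.1 := by
  simp [succAbovePerm]

@[simp]
theorem succAbovePerm_apply_succAbove (j : Fin (n + 1)) (p : Fin (n + 1) × Perm (Fin n))
    (k : Fin n) : succAbovePerm j p (j.succAbove k) = p.1.succAbove (p.2⁻¹ k) := by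
  simp [succAbovePerm, finSuccEquiv'_succAbove, finSuccEquiv'_symm_some]

theorem succAbovePerm_injective (j : Fin (n + 1)) : Function.Injective (succAbovePerm j) := by
  rintro ⟨i, σ⟩ ⟨i', σ'⟩ h
  obtain rfl : i = i' := by simpa using DFunLike.congr_fun h j
  have hσ : σ⁻¹ = σ'⁻¹ := Equiv.ext fun k =>
    succAbove_right_injective (p := i) (by simpa using DFunLike.congr_fun h (j.succAbove k))
  rw [inv_injective hσ]

theorem succAbovePerm_bijective (j : Fin (n + 1)) : Function.Bijective (succAbovePerm j) := by
  rw [Fintype.bijective_iff_injective_and_card]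
  refine ⟨succAbovePerm_injective j, ?_⟩
  simp [Fintype.card_perm, Nat.factorial_succ]

variable {α M : Type*} [AddCommMonoid M]

theorem sum_sum_perm_succAbove (g : (Fin n → α) → M) (θ : Fin (n + 1) → α) (j : Fin (n + 1)) :
    ∑ i : Fin (n + 1), ∑ σ : Perm (Fin n), g (fun k => θ (i.succAbove (σ⁻¹ k))) =
      ∑ τ : Perm (Fin (n + 1)), g (θ ∘ τ ∘ j.succAbove) := by
  rw [← Fintype.sum_prod_type']
  exact Fintype.sum_bijective _ (succAbovePerm_bijective j) _ _ fun p => by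
    simp only [Function.comp_def, succAbovePerm_apply_succAbove]

theorem sum_sum_sum_perm_succAbove (r : Fin (n + 1) → (Fin n → α) → M) (θ : Fin (n + 1) → α) :
    ∑ i : Fin (n + 1), ∑ j, ∑ σ : Perm (Fin n), r j (fun k => θ (i.succAbove (σ⁻¹ k))) =
      ∑ τ : Perm (Fin (n + 1)), ∑ j, r j ((θ ∘ τ) ∘ j.succAbove) := by
  rw [Finset.sum_comm, Finset.sum_comm (γ := Perm (Fin (n + 1)))]
  exact Finset.sum_congr rfl fun j _ => sum_sum_perm_succAbove (r j) θ j

end Fin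

theorem stmt_2_general {n : ℕ} {D : Type} [Fintype D] [Nonempty D]
    {Θ : Type}
    (v : Fin (n+1) → D → Θ → ℝ) (f : (Fin (n+1) → Θ) → D)
    (hVCGperm : ∀ (θ : Fin (n+1) → Θ) (σ : Equiv.Perm (Fin (n+1))),
      VCGtot v f (fun i => θ (σ⁻¹ i)) = VCGtot v f θ)
    (r : Fin (n+1) → (Fin n → Θ) → ℝ)
    (hr : ∀ θ : Fin (n+1) → Θ, ∑ i : Fin (n+1), r i (θ ∘ i.succAbove) ≤ VCGtot v f θ)
    (r' : (Fin n → Θ) → ℝ)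
    (hr' : ∀ x : Fin n → Θ, r' x =
      (1 / (Nat.factorial (n+1) : ℝ)) *
        ∑ j, ∑ σ : Equiv.Perm (Fin n), r j (fun i => x (σ⁻¹ i))) :
    (∀ (x : Fin n → Θ) (σ : Equiv.Perm (Fin n)), r' (fun i => x (σ⁻¹ i)) = r' x) ∧
    (∀ θ : Fin (n+1) → Θ, ∑ i : Fin (n+1), r' (θ ∘ i.succAbove) ≤ VCGtot v f θ) := by
  refine ⟨fun x σ => ?_, fun θ => ?_⟩
  · simp only [hr', sum_perm_apply_inv_comp]
  · calc ∑ i : Fin (n + 1), r' (θ ∘ i.succAbove)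
        = 1 / ((n + 1).factorial : ℝ) *
            ∑ τ : Perm (Fin (n + 1)), ∑ j, r j ((θ ∘ τ) ∘ j.succAbove) := by
          simp only [hr', ← Finset.mul_sum, Function.comp_apply, Fin.sum_sum_sum_perm_succAbove]
      _ ≤ 1 / ((n + 1).factorial : ℝ) * ∑ τ : Perm (Fin (n + 1)), VCGtot v f (θ ∘ τ) := by
          gcongr with τ
          exact hr _
      _ = VCGtot v f θ := by
          rw [sum_perm_comp_of_invariant _ hVCGperm, Fintype.card_fin, nsmul_eq_mul]
          field_simp

theorem stmt_2 {n : ℕ} (hn : 1 ≤ n) {D : Type} [Fintype D] [Nonempty D]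
    {Θ : Type} [Nonempty Θ]
    (v : Fin (n+1) → D → Θ → ℝ) (f : (Fin (n+1) → Θ) → D)
    (hf : ∀ (θ : Fin (n+1) → Θ) (d : D),
      ∑ i, v i d (θ i) ≤ ∑ i, v i (f θ) (θ i))
    (hVCGperm : ∀ (θ : Fin (n+1) → Θ) (σ : Equiv.Perm (Fin (n+1))),
      VCGtot v f (fun i => θ (σ⁻¹ i)) = VCGtot v f θ)
    (r : Fin (n+1) → (Fin n → Θ) → ℝ)
    (hr : ∀ θ : Fin (n+1) → Θ, ∑ i : Fin (n+1), r i (θ ∘ i.succAbove) ≤ VCGtot v f θ)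
    (r' : (Fin n → Θ) → ℝ)
    (hr' : ∀ x : Fin n → Θ, r' x =
      (1 / (Nat.factorial (n+1) : ℝ)) *
        ∑ j, ∑ σ : Equiv.Perm (Fin n), r j (fun i => x (σ⁻¹ i))) :
    (∀ (x : Fin n → Θ) (σ : Equiv.Perm (Fin n)), r' (fun i => x (σ⁻¹ i)) = r' x) ∧
    (∀ θ : Fin (n+1) → Θ, ∑ i : Fin (n+1), r' (θ ∘ i.succAbove) ≤ VCGtot v f θ) :=
  stmt_2_general v f hVCGperm r hr r' hr'
end

section
/- Assume all type sets equal a common set Θ_0 and that the total VCG payment VCG(θ) = Σ_i VCG_i(θ) is permutation independent. Let r = (r_1,…,r_n) be a Groves mechanism and define the anonymous Groves mechanism r'(x) := (1/n!) · Σ_{j=1}^n Σ_{π ∈ Π(n−1)} r_j(x^π). If an anonymous Groves mechanism r^0 is collectively dominated by r, then r^0 is collectively dominated by r'. -/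
/-!
Sum the domination inequality at `θ ∘ τ` over all relabellings `τ` of the agents. On the left
every term equals the collective rebate of `r0` at `θ`, since the collective rebate of an
anonymous mechanism is invariant under relabelling. On the right the terms add up to
`(n + 1)!` times the collective rebate of `r'` at `θ`, because a permutation `τ` is the same
datum as the agent `τ j` together with the induced bijection from the agents other than `j`
onto those other than `τ j`. Strictness comes from the term `τ = 1`.
-/

open Finset Equiv

section

variable {n : ℕ}

def permLiftSuccAbove (j i : Fin (n + 1)) (σ : Perm (Fin n)) : Perm (Fin (n + 1)) :=
  (finSuccEquiv' j).trans ((optionCongr σ).trans (finSuccEquiv' i).symm)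

@[simp]
lemma permLiftSuccAbove_apply_self (j i : Fin (n + 1)) (σ : Perm (Fin n)) :
    permLiftSuccAbove j i σ j = i := by
  simp [permLiftSuccAbove]

@[simp]
lemma permLiftSuccAbove_apply_succAbove (j i : Fin (n + 1)) (σ : Perm (Fin n)) (k : Fin n) :
    permLiftSuccAbove j i σ (j.succAbove k) = i.succAbove (σ k) := by
  simp [permLiftSuccAbove]

lemma bijective_permLiftSuccAbove (j : Fin (n + 1)) :
    Function.Bijective fun p : Fin (n + 1) × Perm (Fin n) => permLiftSuccAbove j p.1 p.2 := by
  rw [Fintype.bijective_iff_injective_and_card]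
  refine ⟨fun ⟨i, σ⟩ ⟨i', σ'⟩ h => ?_, by simp [Fintype.card_perm, Nat.factorial_succ]⟩
  have hi : i = i' := by simpa using DFunLike.congr_fun h j
  subst hi
  refine Prod.ext rfl (Equiv.ext fun k => Fin.succAbove_right_injective (p := i) ?_)
  simpa using DFunLike.congr_fun h (j.succAbove k)

lemma exists_perm_comp_succAbove (τ : Perm (Fin (n + 1))) (j : Fin (n + 1)) :
    ∃ σ : Perm (Fin n), τ ∘ j.succAbove = (τ j).succAbove ∘ σ := by
  obtain ⟨⟨i, σ⟩, rfl⟩ := (bijective_permLiftSuccAbove j).surjective τ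
  exact ⟨σ, funext fun k => by simp⟩

lemma sum_perm_comp_succAbove {M : Type*} [AddCommMonoid M] (F : (Fin n → Fin (n + 1)) → M)
    (j : Fin (n + 1)) :
    ∑ τ : Perm (Fin (n + 1)), F (τ ∘ j.succAbove) =
      ∑ i : Fin (n + 1), ∑ σ : Perm (Fin n), F (i.succAbove ∘ σ) := by
  rw [← Fintype.sum_prod_type', ← (bijective_permLiftSuccAbove j).sum_comp]
  exact Fintype.sum_congr _ _ fun p => congrArg F (funext fun k => by simp)

lemma sum_comp_perm_comp_succAbove {α M : Type*} [AddCommMonoid M] (g : (Fin n → α) → M)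
    (hg : ∀ (x : Fin n → α) (σ : Perm (Fin n)), g (x ∘ σ) = g x)
    (θ : Fin (n + 1) → α) (τ : Perm (Fin (n + 1))) :
    ∑ j : Fin (n + 1), g (θ ∘ τ ∘ j.succAbove) = ∑ j : Fin (n + 1), g (θ ∘ j.succAbove) := by
  calc ∑ j : Fin (n + 1), g (θ ∘ τ ∘ j.succAbove)
        = ∑ j : Fin (n + 1), g (θ ∘ (τ j).succAbove) := by
        refine Fintype.sum_congr _ _ fun j => ?_
        obtain ⟨σ, hσ⟩ := exists_perm_comp_succAbove τ j
        rw [hσ, ← Function.comp_assoc, hg]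
    _ = ∑ j : Fin (n + 1), g (θ ∘ j.succAbove) :=
        Equiv.sum_comp τ fun i => g (θ ∘ i.succAbove)

lemma sum_symmetrization_comp_succAbove {α M : Type*} [AddCommMonoid M]
    (r : Fin (n + 1) → (Fin n → α) → M) (θ : Fin (n + 1) → α) :
    ∑ i : Fin (n + 1), ∑ j, ∑ σ : Perm (Fin n), r j (fun k => θ (i.succAbove (σ⁻¹ k))) =
      ∑ τ : Perm (Fin (n + 1)), ∑ j, r j (θ ∘ τ ∘ j.succAbove) := by
  rw [Finset.sum_comm, Finset.sum_comm (γ := Perm (Fin (n + 1)))]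
  refine Fintype.sum_congr _ _ fun j => ?_
  rw [sum_perm_comp_succAbove (fun ι => r j (θ ∘ ι)) j]
  refine Fintype.sum_congr _ _ fun i => ?_
  exact Fintype.sum_equiv (Equiv.inv _) _ _ fun σ => rfl

end

theorem stmt_3_general {n : ℕ} {Θ : Type}
    (r : Fin (n+1) → (Fin n → Θ) → ℝ)
    (r' : (Fin n → Θ) → ℝ)
    (hr' : ∀ x : Fin n → Θ, r' x =
      (1 / (Nat.factorial (n+1) : ℝ)) *
        ∑ j, ∑ σ : Equiv.Perm (Fin n), r j (fun i => x (σ⁻¹ i)))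
    (r0 : (Fin n → Θ) → ℝ)
    (hr0perm : ∀ (x : Fin n → Θ) (σ : Equiv.Perm (Fin n)),
      r0 (fun i => x (σ⁻¹ i)) = r0 x)
    (hdom : (∀ θ : Fin (n+1) → Θ,
        ∑ i : Fin (n+1), r0 (θ ∘ i.succAbove) ≤ ∑ i : Fin (n+1), r i (θ ∘ i.succAbove)) ∧
      (∃ θ : Fin (n+1) → Θ,
        ∑ i : Fin (n+1), r0 (θ ∘ i.succAbove) < ∑ i : Fin (n+1), r i (θ ∘ i.succAbove))) :
    (∀ θ : Fin (n+1) → Θ,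
      ∑ i : Fin (n+1), r0 (θ ∘ i.succAbove) ≤ ∑ i : Fin (n+1), r' (θ ∘ i.succAbove)) ∧
    (∃ θ : Fin (n+1) → Θ,
      ∑ i : Fin (n+1), r0 (θ ∘ i.succAbove) < ∑ i : Fin (n+1), r' (θ ∘ i.succAbove)) := by
  have hfact : (0 : ℝ) < (n + 1).factorial := by positivity
  have hr'_sum (θ : Fin (n + 1) → Θ) :
      ((n + 1).factorial : ℝ) * ∑ i : Fin (n + 1), r' (θ ∘ i.succAbove) =
      ∑ τ : Perm (Fin (n + 1)), ∑ j : Fin (n + 1), r j (θ ∘ τ ∘ j.succAbove) := by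
    simp_rw [hr', ← Finset.mul_sum, ← mul_assoc, mul_one_div_cancel hfact.ne', one_mul]
    exact sum_symmetrization_comp_succAbove r θ
  have hr0_sum (θ : Fin (n + 1) → Θ) :
      ((n + 1).factorial : ℝ) * ∑ i : Fin (n + 1), r0 (θ ∘ i.succAbove) =
      ∑ τ : Perm (Fin (n + 1)), ∑ j : Fin (n + 1), r0 (θ ∘ τ ∘ j.succAbove) := by
    have hr0comp (x : Fin n → Θ) (σ : Perm (Fin n)) : r0 (x ∘ σ) = r0 x := by
      simpa [Function.comp_def] using hr0perm x σ⁻¹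
    simp_rw [sum_comp_perm_comp_succAbove r0 hr0comp θ, sum_const, card_univ,
      Fintype.card_perm, Fintype.card_fin, nsmul_eq_mul]
  refine ⟨fun θ => le_of_mul_le_mul_left ?_ hfact, ?_⟩
  · rw [hr0_sum, hr'_sum]
    exact sum_le_sum fun τ _ => hdom.1 (θ ∘ τ)
  · obtain ⟨θ, hθ⟩ := hdom.2
    refine ⟨θ, lt_of_mul_lt_mul_left ?_ hfact.le⟩
    rw [hr0_sum, hr'_sum]
    exact sum_lt_sum (fun τ _ => hdom.1 (θ ∘ τ)) ⟨1, mem_univ _, hθ⟩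

theorem stmt_3 {n : ℕ} (hn : 1 ≤ n) {D : Type} [Fintype D] [Nonempty D]
    {Θ : Type} [Nonempty Θ]
    (v : Fin (n+1) → D → Θ → ℝ) (f : (Fin (n+1) → Θ) → D)
    (hf : ∀ (θ : Fin (n+1) → Θ) (d : D),
      ∑ i, v i d (θ i) ≤ ∑ i, v i (f θ) (θ i))
    (hVCGperm : ∀ (θ : Fin (n+1) → Θ) (σ : Equiv.Perm (Fin (n+1))),
      VCGtot v f (fun i => θ (σ⁻¹ i)) = VCGtot v f θ)
    (r : Fin (n+1) → (Fin n → Θ) → ℝ)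
    (r' : (Fin n → Θ) → ℝ)
    (hr' : ∀ x : Fin n → Θ, r' x =
      (1 / (Nat.factorial (n+1) : ℝ)) *
        ∑ j, ∑ σ : Equiv.Perm (Fin n), r j (fun i => x (σ⁻¹ i)))
    (r0 : (Fin n → Θ) → ℝ)
    (hr0perm : ∀ (x : Fin n → Θ) (σ : Equiv.Perm (Fin n)),
      r0 (fun i => x (σ⁻¹ i)) = r0 x)
    (hdom : (∀ θ : Fin (n+1) → Θ,
        ∑ i : Fin (n+1), r0 (θ ∘ i.succAbove) ≤ ∑ i : Fin (n+1), r i (θ ∘ i.succAbove)) ∧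
      (∃ θ : Fin (n+1) → Θ,
        ∑ i : Fin (n+1), r0 (θ ∘ i.succAbove) < ∑ i : Fin (n+1), r i (θ ∘ i.succAbove))) :
    (∀ θ : Fin (n+1) → Θ,
      ∑ i : Fin (n+1), r0 (θ ∘ i.succAbove) ≤ ∑ i : Fin (n+1), r' (θ ∘ i.succAbove)) ∧
    (∃ θ : Fin (n+1) → Θ,
      ∑ i : Fin (n+1), r0 (θ ∘ i.succAbove) < ∑ i : Fin (n+1), r' (θ ∘ i.succAbove)) :=
  stmt_3_general r r' hr' r0 hr0perm hdom
end

section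
/- Suppose n ≥ 3, all type sets equal a common set Θ_0 containing at least n−1 elements, and there exists at least one non-deficit anonymous Groves mechanism determined by a permutation-independent function r : Θ_0^{n−1} → ℝ. Then there exist two non-deficit anonymous Groves mechanisms r and r' such that r collectively dominates r' but r does not individually dominate r'. -/
/-!
Take `r₁ = r` and `r₂ = r - g`, where `g` depends only on whether a fixed type `a` occurs exactly
once in the profile: `g = -1` if it does and `g = n` otherwise. Among the `n + 1` profiles
`θ_{-i}` of a full profile `θ`, at most `n` contain `a` exactly once (`n + 1 ≥ 3` deletions cannot all
leave exactly one `a`), so `∑ᵢ g(θ_{-i}) ≥ n - n = 0`, with strict inequality when `θ` is constantly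
`a`. Hence `r₂` is non-deficit and `r₁` collectively dominates it, while `r₂ > r₁` on any profile
with exactly one `a`, which exists because `Θ` has at least `n` elements.
-/

open Finset

namespace Fin

variable {m : ℕ}

lemma card_filter_succAbove_add (p : Fin (m + 1) → Prop) [DecidablePred p] (i : Fin (m + 1)) :
    #{j | p (i.succAbove j)} + (if p i then 1 else 0) = #{j | p j} := by
  simp only [card_filter]
  rw [sum_univ_succAbove _ i, add_comm]

lemma exists_card_filter_succAbove_ne_one (hm : 2 ≤ m) (p : Fin (m + 1) → Prop)
    [DecidablePred p] : ∃ i : Fin (m + 1), #{j | p (i.succAbove j)} ≠ 1 := by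
  by_contra! h
  have hk (i : Fin (m + 1)) : 1 + (if p i then 1 else 0) = #{j | p j} := by
    have := card_filter_succAbove_add p i
    rwa [h i] at this
  have hconst (i : Fin (m + 1)) : p i ↔ p 0 := by
    have := (hk i).trans (hk 0).symm
    by_cases hi : p i <;> by_cases h0 : p 0 <;> simp [hi, h0] at this ⊢
  by_cases hp : p 0
  · have hall : #{j | p j} = m + 1 := by
      simp [filter_true_of_mem fun i _ => (hconst i).2 hp]
    have := hk 0
    simp only [hp, if_true] at this
    omega
  · have hnone : #{j | p j} = 0 := by
      simp [filter_false_of_mem fun i _ => mt (hconst i).1 hp]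
    have := hk 0
    omega

lemma sum_nonneg_of_neg_one_le (g : Fin (m + 1) → ℝ) (hg : ∀ i, -1 ≤ g i) (i₀ : Fin (m + 1))
    (hi₀ : (m : ℝ) ≤ g i₀) : 0 ≤ ∑ i, g i := by
  have hrest : ∑ j : Fin m, (-1 : ℝ) ≤ ∑ j, g (i₀.succAbove j) :=
    sum_le_sum fun j _ => hg _
  rw [sum_univ_succAbove g i₀]
  simp only [sum_const, nsmul_eq_mul, mul_neg, mul_one] at hrest
  linarith

end Fin

section ExactlyOnceGap

variable {Θ : Type} [DecidableEq Θ] {n : ℕ}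

def exactlyOnceGap (n : ℕ) (a : Θ) (y : Fin n → Θ) : ℝ :=
  if #{j | y j = a} = 1 then -1 else n

lemma exactlyOnceGap_perm (a : Θ) (y : Fin n → Θ) (σ : Equiv.Perm (Fin n)) :
    exactlyOnceGap n a (fun i => y (σ⁻¹ i)) = exactlyOnceGap n a y := by
  have hcard : #{j | y (σ⁻¹ j) = a} = #{j | y j = a} := by
    simp only [card_filter]
    exact Equiv.sum_comp σ⁻¹ fun j => if y j = a then 1 else 0
  simp only [exactlyOnceGap, hcard]

lemma neg_one_le_exactlyOnceGap (a : Θ) (y : Fin n → Θ) : -1 ≤ exactlyOnceGap n a y := by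
  unfold exactlyOnceGap
  split_ifs
  · exact le_rfl
  · linarith [n.cast_nonneg (α := ℝ)]

lemma sum_exactlyOnceGap_nonneg (hn : 2 ≤ n) (a : Θ) (θ : Fin (n + 1) → Θ) :
    0 ≤ ∑ i : Fin (n + 1), exactlyOnceGap n a (θ ∘ i.succAbove) := by
  obtain ⟨i₀, hi₀⟩ := Fin.exists_card_filter_succAbove_ne_one hn fun j => θ j = a
  refine Fin.sum_nonneg_of_neg_one_le _ (fun i => neg_one_le_exactlyOnceGap a _) i₀ ?_
  simp [exactlyOnceGap, hi₀]

lemma sum_exactlyOnceGap_const (hn : 2 ≤ n) (a : Θ) :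
    ∑ i : Fin (n + 1), exactlyOnceGap n a ((fun _ => a) ∘ i.succAbove) = (n + 1) * n := by
  have hne : n ≠ 1 := by omega
  simp [exactlyOnceGap, hne]

lemma exactlyOnceGap_of_injective {x : Fin n → Θ} (hx : Function.Injective x) (j₀ : Fin n) :
    exactlyOnceGap n (x j₀) x = -1 := by
  simp [exactlyOnceGap, hx.eq_iff, filter_eq']

end ExactlyOnceGap

theorem stmt_4_general {n : ℕ} (hn : 2 ≤ n) {D : Type} [Fintype D] [Nonempty D]
    {Θ : Type}
    (hcard : ∃ x : Fin n → Θ, Function.Injective x)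
    (v : Fin (n+1) → D → Θ → ℝ) (f : (Fin (n+1) → Θ) → D)
    (r : (Fin n → Θ) → ℝ)
    (hperm : ∀ (x : Fin n → Θ) (σ : Equiv.Perm (Fin n)),
      r (fun i => x (σ⁻¹ i)) = r x)
    (hnd : ∀ θ : Fin (n+1) → Θ,
      ∑ i : Fin (n+1), r (θ ∘ i.succAbove) ≤ VCGtot v f θ) :
    ∃ r₁ r₂ : (Fin n → Θ) → ℝ,
      (∀ (x : Fin n → Θ) (σ : Equiv.Perm (Fin n)), r₁ (fun i => x (σ⁻¹ i)) = r₁ x) ∧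
      (∀ (x : Fin n → Θ) (σ : Equiv.Perm (Fin n)), r₂ (fun i => x (σ⁻¹ i)) = r₂ x) ∧
      (∀ θ : Fin (n+1) → Θ, ∑ i : Fin (n+1), r₁ (θ ∘ i.succAbove) ≤ VCGtot v f θ) ∧
      (∀ θ : Fin (n+1) → Θ, ∑ i : Fin (n+1), r₂ (θ ∘ i.succAbove) ≤ VCGtot v f θ) ∧
      -- r₁ collectively dominates r₂
      ((∀ θ : Fin (n+1) → Θ,
          ∑ i : Fin (n+1), r₂ (θ ∘ i.succAbove) ≤ ∑ i : Fin (n+1), r₁ (θ ∘ i.succAbove)) ∧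
        (∃ θ : Fin (n+1) → Θ,
          ∑ i : Fin (n+1), r₂ (θ ∘ i.succAbove) < ∑ i : Fin (n+1), r₁ (θ ∘ i.succAbove))) ∧
      -- r₁ does not individually dominate r₂
      ¬ ((∀ (i : Fin (n+1)) (θ : Fin (n+1) → Θ), r₂ (θ ∘ i.succAbove) ≤ r₁ (θ ∘ i.succAbove)) ∧
        (∃ (i : Fin (n+1)) (θ : Fin (n+1) → Θ),
          r₂ (θ ∘ i.succAbove) < r₁ (θ ∘ i.succAbove))) := by
  classical
  obtain ⟨x, hx⟩ := hcard
  set a := x ⟨0, by omega⟩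
  set g := exactlyOnceGap n a
  have hsum (θ : Fin (n + 1) → Θ) := sum_exactlyOnceGap_nonneg hn a θ
  have hpos : 0 < ∑ i : Fin (n + 1), g ((fun _ => a) ∘ i.succAbove) := by
    rw [sum_exactlyOnceGap_const hn]
    have : (2 : ℝ) ≤ n := by exact_mod_cast hn
    positivity
  refine ⟨r, r - g, hperm, fun y σ => by simp only [Pi.sub_apply, hperm, g, exactlyOnceGap_perm],
    hnd, fun θ => ?_, ⟨fun θ => ?_, fun _ => a, ?_⟩, fun ⟨hdom, _⟩ => ?_⟩
  · simpa [sum_sub_distrib] using (hnd θ).trans' (sub_le_self _ (hsum θ))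
  · simpa [sum_sub_distrib] using hsum θ
  · simpa [sum_sub_distrib] using hpos
  · have hx₀ : (Fin.cons a x : Fin (n + 1) → Θ) ∘ Fin.succAbove 0 = x := by
      funext j; simp
    have hgx : g x = -1 := exactlyOnceGap_of_injective hx _
    have := hdom 0 (Fin.cons a x)
    rw [hx₀, Pi.sub_apply] at this
    linarith

theorem stmt_4 {n : ℕ} (hn : 2 ≤ n) {D : Type} [Fintype D] [Nonempty D]
    {Θ : Type} [Nonempty Θ]
    (hcard : ∃ x : Fin n → Θ, Function.Injective x)
    (v : Fin (n+1) → D → Θ → ℝ) (f : (Fin (n+1) → Θ) → D)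
    (hf : ∀ (θ : Fin (n+1) → Θ) (d : D),
      ∑ i, v i d (θ i) ≤ ∑ i, v i (f θ) (θ i))
    (r : (Fin n → Θ) → ℝ)
    (hperm : ∀ (x : Fin n → Θ) (σ : Equiv.Perm (Fin n)),
      r (fun i => x (σ⁻¹ i)) = r x)
    (hnd : ∀ θ : Fin (n+1) → Θ,
      ∑ i : Fin (n+1), r (θ ∘ i.succAbove) ≤ VCGtot v f θ) :
    ∃ r₁ r₂ : (Fin n → Θ) → ℝ,
      (∀ (x : Fin n → Θ) (σ : Equiv.Perm (Fin n)), r₁ (fun i => x (σ⁻¹ i)) = r₁ x) ∧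
      (∀ (x : Fin n → Θ) (σ : Equiv.Perm (Fin n)), r₂ (fun i => x (σ⁻¹ i)) = r₂ x) ∧
      (∀ θ : Fin (n+1) → Θ, ∑ i : Fin (n+1), r₁ (θ ∘ i.succAbove) ≤ VCGtot v f θ) ∧
      (∀ θ : Fin (n+1) → Θ, ∑ i : Fin (n+1), r₂ (θ ∘ i.succAbove) ≤ VCGtot v f θ) ∧
      -- r₁ collectively dominates r₂
      ((∀ θ : Fin (n+1) → Θ,
          ∑ i : Fin (n+1), r₂ (θ ∘ i.succAbove) ≤ ∑ i : Fin (n+1), r₁ (θ ∘ i.succAbove)) ∧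
        (∃ θ : Fin (n+1) → Θ,
          ∑ i : Fin (n+1), r₂ (θ ∘ i.succAbove) < ∑ i : Fin (n+1), r₁ (θ ∘ i.succAbove))) ∧
      -- r₁ does not individually dominate r₂
      ¬ ((∀ (i : Fin (n+1)) (θ : Fin (n+1) → Θ), r₂ (θ ∘ i.succAbove) ≤ r₁ (θ ∘ i.succAbove)) ∧
        (∃ (i : Fin (n+1)) (θ : Fin (n+1) → Θ),
          r₂ (θ ∘ i.succAbove) < r₁ (θ ∘ i.succAbove))) :=
  stmt_4_general hn hcard v f r hperm hnd
end

section
/- In the public project problem with equal participation costs and n = 2 agents, for an anonymous non-deficit Groves mechanism determined by a function r : [0,c] → ℝ, the following are equivalent: (1) the mechanism is individually undominated among non-deficit Groves mechanisms; (2) r(x) = 0 for all x ∈ [0,c], i.e., the mechanism is the VCG mechanism; (3) the mechanism is collectively undominated among non-deficit Groves mechanisms. -/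
/-!
Every VCG payment is nonnegative, and all of them vanish at a constant type profile. Hence a
non-deficit Groves mechanism for two agents redistributes a total of at most `0` whenever both
agents report the same type `x`; for an anonymous `r` this forces `r ≤ 0` on `[0, c]`, so VCG
(`r = 0`) dominates every other anonymous non-deficit mechanism, in both senses. Conversely, a
mechanism `r'` dominating VCG would have `r' 0 x + r' 1 x = 0` on the diagonal; adding the
domination inequalities at a profile `(a, b)` and at its swap `(b, a)` then gives
`0 < (r' 0 a + r' 1 a) + (r' 0 b + r' 1 b) = 0`.
-/

/-- VCG payment of agent `i` in the equal-cost public project with `N` agents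
and cost `c`. -/
noncomputable def ppVCGi (N : ℕ) (c : ℝ) (i : Fin N) (θ : Fin N → ℝ) : ℝ :=
  max 0 (∑ j ∈ Finset.univ.erase i, (θ j - c / N)) -
    (if c ≤ ∑ j, θ j then 1 else 0) * ∑ j ∈ Finset.univ.erase i, (θ j - c / N)

theorem ppVCGi_nonneg (N : ℕ) (c : ℝ) (i : Fin N) (θ : Fin N → ℝ) : 0 ≤ ppVCGi N c i θ := by
  unfold ppVCGi
  split_ifs
  · linarith [le_max_right 0 (∑ j ∈ Finset.univ.erase i, (θ j - c / N))]
  · simp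

theorem ppVCGi_const (N : ℕ) (c : ℝ) (i : Fin N) (x : ℝ) : ppVCGi N c i (fun _ => x) = 0 := by
  have hN : (0 : ℝ) < N := Nat.cast_pos.mpr (Fin.pos i)
  have hsum : ∑ _j : Fin N, x = N * x := by simp
  unfold ppVCGi
  rw [hsum]
  split_ifs with h
  · have hx : 0 ≤ x - c / N := by rw [sub_nonneg, div_le_iff₀' hN]; exact h
    rw [max_eq_right (Finset.sum_nonneg fun _ _ => hx)]
    ring
  · have hx : x - c / N ≤ 0 := by rw [sub_nonpos, le_div_iff₀' hN]; linarith
    rw [max_eq_left (Finset.sum_nonpos fun _ _ => hx)]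
    ring

namespace PublicProject

/-- Agent `i` receives `r i (θ (i.succAbove 0))`: `i.succAbove 0` is the other agent. -/
def IsNonDeficit (c : ℝ) (r : Fin 2 → ℝ → ℝ) : Prop :=
  ∀ θ : Fin 2 → ℝ, (∀ i, θ i ∈ Set.Icc 0 c) →
    ∑ i : Fin 2, r i (θ (i.succAbove 0)) ≤ ∑ i : Fin 2, ppVCGi 2 c i θ

def IndividuallyDominates (c : ℝ) (r r' : Fin 2 → ℝ → ℝ) : Prop :=
  (∀ (i : Fin 2) (θ : Fin 2 → ℝ), (∀ j, θ j ∈ Set.Icc 0 c) →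
    r i (θ (i.succAbove 0)) ≤ r' i (θ (i.succAbove 0))) ∧
  ∃ (i : Fin 2) (θ : Fin 2 → ℝ), (∀ j, θ j ∈ Set.Icc 0 c) ∧
    r i (θ (i.succAbove 0)) < r' i (θ (i.succAbove 0))

def CollectivelyDominates (c : ℝ) (r r' : Fin 2 → ℝ → ℝ) : Prop :=
  (∀ θ : Fin 2 → ℝ, (∀ j, θ j ∈ Set.Icc 0 c) →
    ∑ i : Fin 2, r i (θ (i.succAbove 0)) ≤ ∑ i : Fin 2, r' i (θ (i.succAbove 0))) ∧
  ∃ θ : Fin 2 → ℝ, (∀ j, θ j ∈ Set.Icc 0 c) ∧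
    ∑ i : Fin 2, r i (θ (i.succAbove 0)) < ∑ i : Fin 2, r' i (θ (i.succAbove 0))

def IndividuallyUndominated (c : ℝ) (r : Fin 2 → ℝ → ℝ) : Prop :=
  ¬∃ r', IsNonDeficit c r' ∧ IndividuallyDominates c r r'

def CollectivelyUndominated (c : ℝ) (r : Fin 2 → ℝ → ℝ) : Prop :=
  ¬∃ r', IsNonDeficit c r' ∧ CollectivelyDominates c r r'

theorem sum_apply_other (f : Fin 2 → ℝ → ℝ) (θ : Fin 2 → ℝ) :
    ∑ i : Fin 2, f i (θ (i.succAbove 0)) = f 0 (θ 1) + f 1 (θ 0) :=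
  Fin.sum_univ_two _

theorem isNonDeficit_zero (c : ℝ) : IsNonDeficit c fun _ _ => 0 := fun θ _ => by
  rw [Finset.sum_const_zero]
  exact Finset.sum_nonneg fun i _ => ppVCGi_nonneg 2 c i θ

theorem IsNonDeficit.add_le_zero {c : ℝ} {r : Fin 2 → ℝ → ℝ} (hr : IsNonDeficit c r)
    {x : ℝ} (hx : x ∈ Set.Icc 0 c) : r 0 x + r 1 x ≤ 0 := by
  simpa [ppVCGi_const] using hr (fun _ => x) fun _ => hx

theorem IsNonDeficit.le_zero {c : ℝ} {r : ℝ → ℝ} (hr : IsNonDeficit c fun _ => r)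
    {x : ℝ} (hx : x ∈ Set.Icc 0 c) : r x ≤ 0 := by
  linarith [hr.add_le_zero hx]

theorem individuallyDominates_zero {c : ℝ} {r : ℝ → ℝ} (hr : IsNonDeficit c fun _ => r)
    {x : ℝ} (hx : x ∈ Set.Icc 0 c) (hrx : r x ≠ 0) :
    IndividuallyDominates c (fun _ => r) fun _ _ => 0 :=
  ⟨fun _ _ hθ => hr.le_zero (hθ _),
    0, fun _ => x, fun _ => hx, lt_of_le_of_ne (hr.le_zero hx) hrx⟩

theorem collectivelyDominates_zero {c : ℝ} {r : ℝ → ℝ} (hr : IsNonDeficit c fun _ => r)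
    {x : ℝ} (hx : x ∈ Set.Icc 0 c) (hrx : r x ≠ 0) :
    CollectivelyDominates c (fun _ => r) fun _ _ => 0 := by
  have hneg := lt_of_le_of_ne (hr.le_zero hx) hrx
  refine ⟨fun θ hθ => ?_, fun _ => x, fun _ => hx, ?_⟩
  · rw [sum_apply_other, Finset.sum_const_zero]
    exact add_nonpos (hr.le_zero (hθ _)) (hr.le_zero (hθ _))
  · simp only [Fin.sum_univ_two, add_zero]
    linarith

theorem individuallyUndominated_of_eqOn_zero {c : ℝ} {r : ℝ → ℝ}
    (hr : ∀ x ∈ Set.Icc 0 c, r x = 0) : IndividuallyUndominated c fun _ => r := by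
  rintro ⟨r', hr', hdom, i, θ, hθ, hlt⟩
  set x := θ (i.succAbove 0)
  have hx : x ∈ Set.Icc 0 c := hθ _
  have hnonneg : ∀ j, 0 ≤ r' j x := fun j => hr x hx ▸ hdom j (fun _ => x) fun _ => hx
  have hsum := hr'.add_le_zero hx
  have hnonpos : ∀ j, r' j x ≤ 0 :=
    Fin.forall_fin_two.mpr ⟨by linarith [hnonneg 1], by linarith [hnonneg 0]⟩
  exact (hnonpos i).not_gt (hr x hx ▸ hlt)

theorem collectivelyUndominated_of_eqOn_zero {c : ℝ} {r : ℝ → ℝ}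
    (hr : ∀ x ∈ Set.Icc 0 c, r x = 0) : CollectivelyUndominated c fun _ => r := by
  rintro ⟨r', hr', hdom, θ, hθ, hlt⟩
  have hdiag : ∀ x ∈ Set.Icc 0 c, r' 0 x + r' 1 x = 0 := fun x hx => by
    have := hdom (fun _ => x) fun _ => hx
    simp only [Fin.sum_univ_two, hr x hx, add_zero] at this
    linarith [hr'.add_le_zero hx]
  have hswap := hdom ![θ 1, θ 0] fun j => by fin_cases j <;> simp [hθ]
  rw [sum_apply_other, sum_apply_other] at hswap hlt
  simp only [Matrix.cons_val_zero, Matrix.cons_val_one] at hswap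
  rw [hr _ (hθ 0), hr _ (hθ 1)] at hswap hlt
  linarith [hdiag _ (hθ 0), hdiag _ (hθ 1)]

theorem individuallyUndominated_iff {c : ℝ} {r : ℝ → ℝ} (hr : IsNonDeficit c fun _ => r) :
    IndividuallyUndominated c (fun _ => r) ↔ ∀ x ∈ Set.Icc 0 c, r x = 0 :=
  ⟨fun h _ hx => by_contra fun hrx =>
      h ⟨_, isNonDeficit_zero c, individuallyDominates_zero hr hx hrx⟩,
    individuallyUndominated_of_eqOn_zero⟩

theorem collectivelyUndominated_iff {c : ℝ} {r : ℝ → ℝ} (hr : IsNonDeficit c fun _ => r) :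
    CollectivelyUndominated c (fun _ => r) ↔ ∀ x ∈ Set.Icc 0 c, r x = 0 :=
  ⟨fun h _ hx => by_contra fun hrx =>
      h ⟨_, isNonDeficit_zero c, collectivelyDominates_zero hr hx hrx⟩,
    collectivelyUndominated_of_eqOn_zero⟩

end PublicProject

open PublicProject in
theorem stmt_14_general (c : ℝ) (r : ℝ → ℝ)
    (hnd : ∀ θ : Fin 2 → ℝ, (∀ i, θ i ∈ Set.Icc 0 c) →
      ∑ i : Fin 2, r (θ (i.succAbove 0)) ≤ ∑ i : Fin 2, ppVCGi 2 c i θ) :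
    -- (1) ↔ (2)
    ((¬ ∃ r' : Fin 2 → ℝ → ℝ,
        (∀ θ : Fin 2 → ℝ, (∀ i, θ i ∈ Set.Icc 0 c) →
          ∑ i : Fin 2, r' i (θ (i.succAbove 0)) ≤ ∑ i : Fin 2, ppVCGi 2 c i θ) ∧
        (∀ (i : Fin 2) (θ : Fin 2 → ℝ), (∀ j, θ j ∈ Set.Icc 0 c) →
          r (θ (i.succAbove 0)) ≤ r' i (θ (i.succAbove 0))) ∧
        (∃ (i : Fin 2) (θ : Fin 2 → ℝ), (∀ j, θ j ∈ Set.Icc 0 c) ∧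
          r (θ (i.succAbove 0)) < r' i (θ (i.succAbove 0)))) ↔
      (∀ x ∈ Set.Icc (0:ℝ) c, r x = 0)) ∧
    -- (2) ↔ (3)
    ((∀ x ∈ Set.Icc (0:ℝ) c, r x = 0) ↔
      (¬ ∃ r' : Fin 2 → ℝ → ℝ,
        (∀ θ : Fin 2 → ℝ, (∀ i, θ i ∈ Set.Icc 0 c) →
          ∑ i : Fin 2, r' i (θ (i.succAbove 0)) ≤ ∑ i : Fin 2, ppVCGi 2 c i θ) ∧
        (∀ θ : Fin 2 → ℝ, (∀ j, θ j ∈ Set.Icc 0 c) →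
          ∑ i : Fin 2, r (θ (i.succAbove 0)) ≤ ∑ i : Fin 2, r' i (θ (i.succAbove 0))) ∧
        (∃ θ : Fin 2 → ℝ, (∀ j, θ j ∈ Set.Icc 0 c) ∧
          ∑ i : Fin 2, r (θ (i.succAbove 0)) < ∑ i : Fin 2, r' i (θ (i.succAbove 0))))) :=
  ⟨individuallyUndominated_iff hnd, (collectivelyUndominated_iff hnd).symm⟩

theorem stmt_14 (c : ℝ) (hc : 0 < c) (r : ℝ → ℝ)
    (hnd : ∀ θ : Fin 2 → ℝ, (∀ i, θ i ∈ Set.Icc 0 c) →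
      ∑ i : Fin 2, r (θ (i.succAbove 0)) ≤ ∑ i : Fin 2, ppVCGi 2 c i θ) :
    -- (1) ↔ (2)
    ((¬ ∃ r' : Fin 2 → ℝ → ℝ,
        (∀ θ : Fin 2 → ℝ, (∀ i, θ i ∈ Set.Icc 0 c) →
          ∑ i : Fin 2, r' i (θ (i.succAbove 0)) ≤ ∑ i : Fin 2, ppVCGi 2 c i θ) ∧
        (∀ (i : Fin 2) (θ : Fin 2 → ℝ), (∀ j, θ j ∈ Set.Icc 0 c) →
          r (θ (i.succAbove 0)) ≤ r' i (θ (i.succAbove 0))) ∧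
        (∃ (i : Fin 2) (θ : Fin 2 → ℝ), (∀ j, θ j ∈ Set.Icc 0 c) ∧
          r (θ (i.succAbove 0)) < r' i (θ (i.succAbove 0)))) ↔
      (∀ x ∈ Set.Icc (0:ℝ) c, r x = 0)) ∧
    -- (2) ↔ (3)
    ((∀ x ∈ Set.Icc (0:ℝ) c, r x = 0) ↔
      (¬ ∃ r' : Fin 2 → ℝ → ℝ,
        (∀ θ : Fin 2 → ℝ, (∀ i, θ i ∈ Set.Icc 0 c) →
          ∑ i : Fin 2, r' i (θ (i.succAbove 0)) ≤ ∑ i : Fin 2, ppVCGi 2 c i θ) ∧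
        (∀ θ : Fin 2 → ℝ, (∀ j, θ j ∈ Set.Icc 0 c) →
          ∑ i : Fin 2, r (θ (i.succAbove 0)) ≤ ∑ i : Fin 2, r' i (θ (i.succAbove 0))) ∧
        (∃ θ : Fin 2 → ℝ, (∀ j, θ j ∈ Set.Icc 0 c) ∧
          ∑ i : Fin 2, r (θ (i.succAbove 0)) < ∑ i : Fin 2, r' i (θ (i.succAbove 0))))) :=
  stmt_14_general c r hnd
end

section
/- In the public project problem with equal participation costs, there exists no non-deficit Groves mechanism that collectively dominates the VCG mechanism. That is, there is no family of redistribution functions r_i : [0,c]^{n−1} → ℝ satisfying Σ_i r_i(θ_{-i}) ≤ Σ_i VCG_i(θ) for all θ ∈ [0,c]^n (non-deficit) such that Σ_i r_i(θ_{-i}) ≥ 0 for all θ, with strict inequality for at least one θ. -/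
/-
Write `F θ = ∑ i, r i θ₋ᵢ`. Non-deficit and domination sandwich `0 ≤ F ≤ ∑ VCGᵢ`, so `F`
vanishes wherever all VCG payments do: when `∑ θ ≤ n c / (n + 1)`, or when some `θ i = c` and
the other types sum to at least `n c / (n + 1)` (in particular when two types equal `c`).
Since `r i` ignores coordinate `i`, the alternating sum of `F` over the vertices of the box spanned
by two profiles `θ, η` vanishes. For `η ≡ c` every vertex other than `θ` lies on a face `θ j = c`,
so it suffices that `F` vanish on these faces. On the face `θ i = c` with the other types summing
to less than `n c / (n + 1)`, take `η = c` off `i` and `η i = 0`: the alternating sum is then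
`F θ` plus nonnegative terms.
-/

open Finset Function

theorem Finset.sum_powerset_neg_one_pow_card_mul_eq {ι R : Type*} [DecidableEq ι] [CommRing R]
    {s : Finset ι} {i : ι} (hi : i ∈ s) (G : Finset ι → R) :
    ∑ t ∈ s.powerset, (-1) ^ #t * G t =
      ∑ t ∈ (s.erase i).powerset, (-1) ^ #t * (G t - G (insert i t)) := by
  conv_lhs => rw [← insert_erase hi, sum_powerset_insert (notMem_erase i s), ← sum_add_distrib]
  refine sum_congr rfl fun t ht => ?_
  have hit : i ∉ t := fun h => notMem_erase i s (mem_powerset.1 ht h)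
  rw [card_insert_of_notMem hit, pow_succ]
  ring

section MixedDifference

variable {ι α R : Type*} [Fintype ι] [DecidableEq ι] [CommRing R]

def mixedDiff (F : (ι → α) → R) (θ η : ι → α) : R :=
  ∑ s ∈ univ.powerset, (-1) ^ #s * F (s.piecewise η θ)

theorem mixedDiff_eq_zero_of_update_eq {F : (ι → α) → R} (i : ι)
    (hF : ∀ x a, F (update x i a) = F x) (θ η : ι → α) : mixedDiff F θ η = 0 := by
  rw [mixedDiff, sum_powerset_neg_one_pow_card_mul_eq (mem_univ i)]
  exact sum_eq_zero fun t _ => by rw [piecewise_insert, hF, sub_self, mul_zero]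

theorem mixedDiff_sum {κ : Type*} (s : Finset κ) (F : κ → (ι → α) → R) (θ η : ι → α) :
    mixedDiff (fun x => ∑ k ∈ s, F k x) θ η = ∑ k ∈ s, mixedDiff (F k) θ η := by
  simp only [mixedDiff, mul_sum]
  exact sum_comm

theorem mixedDiff_eq_self {F : (ι → α) → R} {θ η : ι → α}
    (hF : ∀ s : Finset ι, s.Nonempty → F (s.piecewise η θ) = 0) : mixedDiff F θ η = F θ := by
  rw [mixedDiff, sum_eq_single_of_mem ∅ (empty_mem_powerset _)]
  · simp
  · intro s _ hs
    rw [hF s (nonempty_iff_ne_empty.2 hs), mul_zero]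

end MixedDifference

def totalRedistribution {n : ℕ} {α R : Type*} [AddCommMonoid R]
    (r : Fin (n + 1) → (Fin n → α) → R) (θ : Fin (n + 1) → α) : R :=
  ∑ i, r i (θ ∘ i.succAbove)

theorem mixedDiff_totalRedistribution {n : ℕ} {α R : Type*} [CommRing R]
    (r : Fin (n + 1) → (Fin n → α) → R) (θ η : Fin (n + 1) → α) :
    mixedDiff (totalRedistribution r) θ η = 0 := by
  unfold totalRedistribution
  rw [mixedDiff_sum]
  refine sum_eq_zero fun i _ => mixedDiff_eq_zero_of_update_eq i (fun x a => ?_) θ η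
  rw [update_comp_eq_of_notMem_range _ _ (by simp)]

section VCG

variable {n : ℕ} {c : ℝ}

theorem sum_erase_sub_div (θ : Fin (n + 1) → ℝ) (i : Fin (n + 1)) :
    ∑ j ∈ univ.erase i, (θ j - c / ↑(n + 1)) = ∑ j ∈ univ.erase i, θ j - n * c / (n + 1) := by
  rw [sum_sub_distrib, sum_const, card_erase_of_mem (mem_univ i), card_univ, Fintype.card_fin,
    nsmul_eq_mul]
  push_cast
  ring

theorem ppVCGi_eq_zero_of_lt {θ : Fin (n + 1) → ℝ} {i : Fin (n + 1)} (h : ∑ j, θ j < c)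
    (hi : ∑ j ∈ univ.erase i, θ j ≤ n * c / (n + 1)) : ppVCGi (n + 1) c i θ = 0 := by
  have : ∑ j ∈ univ.erase i, (θ j - c / ↑(n + 1)) ≤ 0 := by
    rw [sum_erase_sub_div]
    linarith
  rw [ppVCGi, if_neg h.not_ge, max_eq_left this]
  ring

theorem ppVCGi_eq_zero_of_ge {θ : Fin (n + 1) → ℝ} {i : Fin (n + 1)} (h : c ≤ ∑ j, θ j)
    (hi : n * c / (n + 1) ≤ ∑ j ∈ univ.erase i, θ j) : ppVCGi (n + 1) c i θ = 0 := by
  have : 0 ≤ ∑ j ∈ univ.erase i, (θ j - c / ↑(n + 1)) := by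
    rw [sum_erase_sub_div]
    linarith
  rw [ppVCGi, if_pos h, max_eq_right this]
  ring

theorem natCast_mul_div_add_one_lt (hc : 0 < c) : n * c / (n + 1) < c := by
  rw [div_lt_iff₀ (by positivity)]
  linarith

theorem natCast_mul_div_add_one_le (hc : 0 ≤ c) : n * c / (n + 1) ≤ c := by
  rw [div_le_iff₀ (by positivity)]
  linarith

theorem sum_ppVCGi_eq_zero_of_sum_le (hc : 0 < c) {θ : Fin (n + 1) → ℝ} (hθ : ∀ j, 0 ≤ θ j)
    (h : ∑ j, θ j ≤ n * c / (n + 1)) : ∑ i, ppVCGi (n + 1) c i θ = 0 := by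
  refine sum_eq_zero fun i _ => ppVCGi_eq_zero_of_lt
    (h.trans_lt (natCast_mul_div_add_one_lt hc)) (le_trans ?_ h)
  exact sum_le_sum_of_subset_of_nonneg (erase_subset i univ) fun j _ _ => hθ j

theorem sum_ppVCGi_eq_zero_of_eq (hc : 0 ≤ c) {θ : Fin (n + 1) → ℝ} (hθ : ∀ j, 0 ≤ θ j)
    {i : Fin (n + 1)} (hi : θ i = c) (h : n * c / (n + 1) ≤ ∑ j ∈ univ.erase i, θ j) :
    ∑ k, ppVCGi (n + 1) c k θ = 0 := by
  refine sum_eq_zero fun k _ => ppVCGi_eq_zero_of_ge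
    (hi ▸ single_le_sum (fun j _ => hθ j) (mem_univ i)) ?_
  rcases eq_or_ne k i with rfl | hki
  · exact h
  · exact (natCast_mul_div_add_one_le hc).trans
      (hi ▸ single_le_sum (fun j _ => hθ j) (mem_erase.2 ⟨hki.symm, mem_univ i⟩))

end VCG

section Mechanism

variable {n : ℕ} {c : ℝ}

def IsNonDeficit (c : ℝ) (r : Fin (n + 1) → (Fin n → ℝ) → ℝ) : Prop :=
  ∀ θ : Fin (n + 1) → ℝ, (∀ i, θ i ∈ Set.Icc 0 c) →
    totalRedistribution r θ ≤ ∑ i, ppVCGi (n + 1) c i θ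

def WeaklyDominatesVCG (c : ℝ) (r : Fin (n + 1) → (Fin n → ℝ) → ℝ) : Prop :=
  ∀ θ : Fin (n + 1) → ℝ, (∀ i, θ i ∈ Set.Icc 0 c) → 0 ≤ totalRedistribution r θ

variable {r : Fin (n + 1) → (Fin n → ℝ) → ℝ} {θ : Fin (n + 1) → ℝ}

theorem totalRedistribution_eq_zero_of_sum_ppVCGi_eq_zero (hdef : IsNonDeficit c r)
    (hdom : WeaklyDominatesVCG c r) (hθ : ∀ i, θ i ∈ Set.Icc 0 c)
    (hV : ∑ i, ppVCGi (n + 1) c i θ = 0) : totalRedistribution r θ = 0 :=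
  le_antisymm (hV ▸ hdef θ hθ) (hdom θ hθ)

theorem totalRedistribution_eq_zero_of_eq_of_eq (hc : 0 ≤ c) (hdef : IsNonDeficit c r)
    (hdom : WeaklyDominatesVCG c r) (hθ : ∀ i, θ i ∈ Set.Icc 0 c) {j k : Fin (n + 1)}
    (hjk : j ≠ k) (hj : θ j = c) (hk : θ k = c) : totalRedistribution r θ = 0 := by
  refine totalRedistribution_eq_zero_of_sum_ppVCGi_eq_zero hdef hdom hθ
    (sum_ppVCGi_eq_zero_of_eq hc (fun i => (hθ i).1) hj ?_)
  calc (n : ℝ) * c / (n + 1) ≤ c := natCast_mul_div_add_one_le hc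
    _ ≤ ∑ i ∈ univ.erase j, θ i :=
        hk ▸ single_le_sum (fun i _ => (hθ i).1) (mem_erase.2 ⟨hjk.symm, mem_univ k⟩)

theorem totalRedistribution_update_eq_zero (hc : 0 < c) (hdef : IsNonDeficit c r)
    (hdom : WeaklyDominatesVCG c r) (hθ : ∀ i, θ i ∈ Set.Icc 0 c) {i : Fin (n + 1)}
    (hsmall : ∑ j ∈ univ.erase i, θ j ≤ n * c / (n + 1)) :
    totalRedistribution r (update θ i 0) = 0 := by
  have hupd : ∀ j, update θ i 0 j ∈ Set.Icc 0 c := fun j => by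
    by_cases h : j = i <;> simp [h, hc.le, hθ j]
  refine totalRedistribution_eq_zero_of_sum_ppVCGi_eq_zero hdef hdom hupd
    (sum_ppVCGi_eq_zero_of_sum_le hc (fun j => (hupd j).1) ?_)
  rwa [sum_update_of_mem (mem_univ i), zero_add, sdiff_singleton_eq_erase]

theorem totalRedistribution_eq_zero_of_eq_of_sum_erase_le (hc : 0 < c) (hdef : IsNonDeficit c r)
    (hdom : WeaklyDominatesVCG c r) (hθ : ∀ i, θ i ∈ Set.Icc 0 c) {i : Fin (n + 1)}
    (hi : θ i = c) (hsmall : ∑ j ∈ univ.erase i, θ j ≤ n * c / (n + 1)) :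
    totalRedistribution r θ = 0 := by
  set η : Fin (n + 1) → ℝ := update (fun _ => c) i 0
  have hηi : η i = 0 := update_self ..
  have hη : ∀ j, η j ∈ Set.Icc 0 c := fun j => by
    by_cases h : j = i <;> simp [η, h, hc.le]
  have hmix : ∀ (s : Finset (Fin (n + 1))) j, s.piecewise η θ j ∈ Set.Icc 0 c := fun s j =>
    s.piecewise_cases η θ (· ∈ Set.Icc 0 c) (hη j) (hθ j)
  have hzero : ∀ (s : Finset (Fin (n + 1))) j k, j ≠ k → s.piecewise η θ j = c →
      s.piecewise η θ k = c → totalRedistribution r (s.piecewise η θ) = 0 :=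
    fun s _ _ hjk hj hk =>
      totalRedistribution_eq_zero_of_eq_of_eq hc.le hdef hdom (hmix s) hjk hj hk
  have hempty : (-1) ^ #(∅ : Finset (Fin (n + 1))) * (totalRedistribution r (piecewise ∅ η θ) -
      totalRedistribution r ((insert i (∅ : Finset (Fin (n + 1)))).piecewise η θ)) =
      totalRedistribution r θ := by
    rw [piecewise_insert, piecewise_empty, hηi,
      totalRedistribution_update_eq_zero hc hdef hdom hθ hsmall, card_empty, pow_zero, one_mul,
      sub_zero]
  -- For `t ≠ ∅` the vertex `t` has two coordinates equal to `c`, and so has `insert i t`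
  -- unless `t` is a singleton, where the sign makes the term nonnegative.
  have hterm : ∀ t ∈ (univ.erase i).powerset, 0 ≤ (-1) ^ #t *
      (totalRedistribution r (t.piecewise η θ) -
        totalRedistribution r ((insert i t).piecewise η θ)) := by
    intro t ht
    rcases t.eq_empty_or_nonempty with rfl | ⟨j, hj⟩
    · rw [hempty]
      exact hdom θ hθ
    have hji : j ≠ i := ne_of_mem_erase (mem_powerset.1 ht hj)
    have hit : i ∉ t := fun h => notMem_erase i univ (mem_powerset.1 ht h)
    rw [hzero t i j hji.symm (by simp [hit, hi]) (by simp [hj, η, hji]), zero_sub]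
    rcases eq_singleton_or_nontrivial hj with rfl | hnt
    · simpa using hdom _ (hmix _)
    · obtain ⟨k, hk, hkj⟩ := hnt.exists_ne j
      have hki : k ≠ i := ne_of_mem_erase (mem_powerset.1 ht hk)
      rw [hzero (insert i t) j k hkj.symm (by simp [hj, η, hji]) (by simp [hk, η, hki])]
      simp
  have hcube := mixedDiff_totalRedistribution r θ η
  rw [mixedDiff, sum_powerset_neg_one_pow_card_mul_eq (mem_univ i)] at hcube
  rw [← hempty]
  exact (sum_eq_zero_iff_of_nonneg hterm).1 hcube ∅ (empty_mem_powerset _)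

theorem totalRedistribution_eq_zero_of_eq (hc : 0 < c) (hdef : IsNonDeficit c r)
    (hdom : WeaklyDominatesVCG c r) (hθ : ∀ i, θ i ∈ Set.Icc 0 c) {i : Fin (n + 1)}
    (hi : θ i = c) : totalRedistribution r θ = 0 := by
  rcases le_total (∑ j ∈ univ.erase i, θ j) (n * c / (n + 1)) with hsmall | hlarge
  · exact totalRedistribution_eq_zero_of_eq_of_sum_erase_le hc hdef hdom hθ hi hsmall
  · exact totalRedistribution_eq_zero_of_sum_ppVCGi_eq_zero hdef hdom hθ
      (sum_ppVCGi_eq_zero_of_eq hc.le (fun j => (hθ j).1) hi hlarge)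

theorem totalRedistribution_eq_zero (hc : 0 < c) (hdef : IsNonDeficit c r)
    (hdom : WeaklyDominatesVCG c r) (hθ : ∀ i, θ i ∈ Set.Icc 0 c) :
    totalRedistribution r θ = 0 := by
  rw [← mixedDiff_eq_self (F := totalRedistribution r) (η := fun _ => c),
    mixedDiff_totalRedistribution]
  rintro s ⟨j, hj⟩
  have hmix : ∀ i, s.piecewise (fun _ => c) θ i ∈ Set.Icc 0 c := fun i =>
    s.piecewise_cases _ θ (· ∈ Set.Icc 0 c) ⟨hc.le, le_rfl⟩ (hθ i)
  exact totalRedistribution_eq_zero_of_eq hc hdef hdom hmix (piecewise_eq_of_mem _ _ _ hj)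

end Mechanism

theorem stmt_16_general {n : ℕ} (c : ℝ) (hc : 0 < c) :
    ¬ ∃ r : Fin (n+1) → (Fin n → ℝ) → ℝ,
      (∀ θ : Fin (n+1) → ℝ, (∀ i, θ i ∈ Set.Icc 0 c) →
        ∑ i : Fin (n+1), r i (θ ∘ i.succAbove) ≤
          ∑ i : Fin (n+1), ppVCGi (n+1) c i θ) ∧
      (∀ θ : Fin (n+1) → ℝ, (∀ i, θ i ∈ Set.Icc 0 c) →
        0 ≤ ∑ i : Fin (n+1), r i (θ ∘ i.succAbove)) ∧
      (∃ θ : Fin (n+1) → ℝ, (∀ i, θ i ∈ Set.Icc 0 c) ∧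
        0 < ∑ i : Fin (n+1), r i (θ ∘ i.succAbove)) := by
  rintro ⟨r, hdef, hdom, θ, hθ, hpos⟩
  exact hpos.ne' (totalRedistribution_eq_zero hc hdef hdom hθ)

theorem stmt_16 {n : ℕ} (hn : 1 ≤ n) (c : ℝ) (hc : 0 < c) :
    ¬ ∃ r : Fin (n+1) → (Fin n → ℝ) → ℝ,
      (∀ θ : Fin (n+1) → ℝ, (∀ i, θ i ∈ Set.Icc 0 c) →
        ∑ i : Fin (n+1), r i (θ ∘ i.succAbove) ≤
          ∑ i : Fin (n+1), ppVCGi (n+1) c i θ) ∧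
      (∀ θ : Fin (n+1) → ℝ, (∀ i, θ i ∈ Set.Icc 0 c) →
        0 ≤ ∑ i : Fin (n+1), r i (θ ∘ i.succAbove)) ∧
      (∃ θ : Fin (n+1) → ℝ, (∀ i, θ i ∈ Set.Icc 0 c) ∧
        0 < ∑ i : Fin (n+1), r i (θ ∘ i.succAbove)) :=
  stmt_16_general c hc
end

section
/- In the general public project problem (with participation cost shares c_1,…,c_n > 0 summing to c), the VCG mechanism individually dominates all other pay-only Groves mechanisms; equivalently, every pay-only Groves mechanism r' = (r'_1,…,r'_n) satisfies r'_i(θ_{-i}) ≤ 0 for all agents i and all θ_{-i} ∈ [0,c]^{n−1}. -/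
/-!
Fix agent `i` and the reports `x` of the others, and let `S = ∑_{j ≠ i} (x_j - c_j)`.
Agent `i` can report `c` if `S ≥ 0` (the project is then built, as the others' reports are
nonnegative) and `0` if `S < 0` (it is then not built, since `∑_{j ≠ i} x_j < c - c_i`).
Either way the decision agrees with the sign of `S` and `VCG_i = 0`, so a pay-only
redistribution satisfies `r'_i(x) ≤ VCG_i = 0`.
-/

/-- VCG payment of agent `i` in the public project with `N` agents, total
cost `c` and cost shares `cs`. -/
noncomputable def gppVCGi (N : ℕ) (c : ℝ) (cs : Fin N → ℝ)
    (i : Fin N) (θ : Fin N → ℝ) : ℝ :=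
  max 0 (∑ j ∈ Finset.univ.erase i, (θ j - cs j)) -
    (if c ≤ ∑ j, θ j then 1 else 0) * ∑ j ∈ Finset.univ.erase i, (θ j - cs j)

open Finset

theorem Fin.sum_erase_eq_sum_succAbove {M : Type*} [AddCommGroup M] {n : ℕ}
    (f : Fin (n + 1) → M) (i : Fin (n + 1)) :
    ∑ j ∈ univ.erase i, f j = ∑ k, f (i.succAbove k) := by
  rw [sum_erase_eq_sub (mem_univ i), Fin.sum_univ_succAbove f i]
  abel

section VCG

variable {N : ℕ} {c : ℝ} {cs : Fin N → ℝ} {i : Fin N} {θ : Fin N → ℝ}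

theorem gppVCGi_eq_zero_of_accept (hS : 0 ≤ ∑ j ∈ univ.erase i, (θ j - cs j))
    (hf : c ≤ ∑ j, θ j) : gppVCGi N c cs i θ = 0 := by
  rw [gppVCGi, if_pos hf, max_eq_right hS, one_mul, sub_self]

theorem gppVCGi_eq_zero_of_reject (hS : ∑ j ∈ univ.erase i, (θ j - cs j) ≤ 0)
    (hf : ¬c ≤ ∑ j, θ j) : gppVCGi N c cs i θ = 0 := by
  rw [gppVCGi, if_neg hf, max_eq_left hS, zero_mul, sub_zero]

end VCG

theorem exists_extension_gppVCGi_eq_zero {n : ℕ} {c : ℝ} (hc : 0 ≤ c)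
    {cs : Fin (n + 1) → ℝ} (hsum : ∑ j, cs j = c) {i : Fin (n + 1)} (hci : 0 ≤ cs i)
    {x : Fin n → ℝ}
    (hx : ∀ k, x k ∈ Set.Icc 0 c) :
    ∃ θ : Fin (n + 1) → ℝ, (∀ j, θ j ∈ Set.Icc 0 c) ∧ θ ∘ i.succAbove = x ∧
      gppVCGi (n + 1) c cs i θ = 0 := by
  set S := ∑ k, (x k - cs (i.succAbove k))
  have hS : ∀ t, ∑ j ∈ univ.erase i, ((i.insertNth t x : Fin (n + 1) → ℝ) j - cs j) = S :=
    fun t => by simp only [Fin.sum_erase_eq_sum_succAbove, Fin.insertNth_apply_succAbove, S]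
  have hbox : ∀ t ∈ Set.Icc 0 c, ∀ j,
      (i.insertNth t x : Fin (n + 1) → ℝ) j ∈ Set.Icc 0 c :=
    fun t ht => by simpa [Fin.forall_iff_succAbove i] using ⟨ht, hx⟩
  have hx_nonneg : 0 ≤ ∑ k, x k := sum_nonneg fun k _ => (hx k).1
  rcases le_or_gt 0 S with hS_nonneg | hS_neg
  · refine ⟨i.insertNth c x, hbox c ⟨hc, le_rfl⟩, Fin.insertNth_comp_succAbove .., ?_⟩
    refine gppVCGi_eq_zero_of_accept (hS c ▸ hS_nonneg) ?_
    rw [Fin.sum_insertNth]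
    linarith
  · refine ⟨i.insertNth 0 x, hbox 0 ⟨le_rfl, hc⟩, Fin.insertNth_comp_succAbove .., ?_⟩
    refine gppVCGi_eq_zero_of_reject (hS 0 ▸ hS_neg.le) ?_
    have hcs_others : ∑ k, cs (i.succAbove k) = c - cs i := by
      rw [← hsum, Fin.sum_univ_succAbove cs i, add_sub_cancel_left]
    have hS_eq : S = ∑ k, x k - (c - cs i) := by
      rw [← hcs_others, ← sum_sub_distrib]
    rw [Fin.sum_insertNth]
    linarith

theorem stmt_19_general {n : ℕ} (c : ℝ) (hc : 0 < c)
    (cs : Fin (n+1) → ℝ) (hcs : ∀ i, 0 < cs i) (hsum : ∑ i, cs i = c)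
    (r' : Fin (n+1) → (Fin n → ℝ) → ℝ)
    -- r' is pay-only
    (hpay : ∀ (i : Fin (n+1)) (θ : Fin (n+1) → ℝ), (∀ j, θ j ∈ Set.Icc 0 c) →
      r' i (θ ∘ i.succAbove) ≤ gppVCGi (n+1) c cs i θ) :
    (∀ (i : Fin (n+1)) (x : Fin n → ℝ), (∀ j, x j ∈ Set.Icc 0 c) → r' i x ≤ 0) ∧
    -- consequently, if r' differs from VCG (zero redistribution) on the box,
    -- then the VCG mechanism individually dominates r'
    ((∃ (i : Fin (n+1)) (x : Fin n → ℝ), (∀ j, x j ∈ Set.Icc 0 c) ∧ r' i x ≠ 0) →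
      ((∀ (i : Fin (n+1)) (θ : Fin (n+1) → ℝ), (∀ j, θ j ∈ Set.Icc 0 c) →
          r' i (θ ∘ i.succAbove) ≤ 0) ∧
        (∃ (i : Fin (n+1)) (θ : Fin (n+1) → ℝ), (∀ j, θ j ∈ Set.Icc 0 c) ∧
          r' i (θ ∘ i.succAbove) < 0))) := by
  have hle : ∀ i x, (∀ j, x j ∈ Set.Icc 0 c) → r' i x ≤ 0 := fun i x hx => by
    obtain ⟨θ, hθ, rfl, hzero⟩ :=
      exists_extension_gppVCGi_eq_zero hc.le hsum (hcs i).le hx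
    exact hzero ▸ hpay i θ hθ
  refine ⟨hle, fun ⟨i, x, hx, hne⟩ => ⟨fun i θ hθ => hle i _ fun j => hθ _, ?_⟩⟩
  obtain ⟨θ, hθ, rfl, -⟩ := exists_extension_gppVCGi_eq_zero hc.le hsum (hcs i).le hx
  exact ⟨i, θ, hθ, (hle i _ hx).lt_of_ne hne⟩

theorem stmt_19 {n : ℕ} (hn : 1 ≤ n) (c : ℝ) (hc : 0 < c)
    (cs : Fin (n+1) → ℝ) (hcs : ∀ i, 0 < cs i) (hsum : ∑ i, cs i = c)
    (r' : Fin (n+1) → (Fin n → ℝ) → ℝ)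
    -- r' is pay-only
    (hpay : ∀ (i : Fin (n+1)) (θ : Fin (n+1) → ℝ), (∀ j, θ j ∈ Set.Icc 0 c) →
      r' i (θ ∘ i.succAbove) ≤ gppVCGi (n+1) c cs i θ) :
    (∀ (i : Fin (n+1)) (x : Fin n → ℝ), (∀ j, x j ∈ Set.Icc 0 c) → r' i x ≤ 0) ∧
    -- consequently, if r' differs from VCG (zero redistribution) on the box,
    -- then the VCG mechanism individually dominates r'
    ((∃ (i : Fin (n+1)) (x : Fin n → ℝ), (∀ j, x j ∈ Set.Icc 0 c) ∧ r' i x ≠ 0) →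
      ((∀ (i : Fin (n+1)) (θ : Fin (n+1) → ℝ), (∀ j, θ j ∈ Set.Icc 0 c) →
          r' i (θ ∘ i.succAbove) ≤ 0) ∧
        (∃ (i : Fin (n+1)) (θ : Fin (n+1) → ℝ), (∀ j, θ j ∈ Set.Icc 0 c) ∧
          r' i (θ ∘ i.succAbove) < 0))) :=
  stmt_19_general c hc cs hcs hsum r' hpay
end
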